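/- arXiv:math/0301244 — 3 statements merged into one kernel-verified Lean document; each statement's English description precedes it below -/
import Mathlib

section
/- Let H be a Hopf algebra over a field, K ⊆ H a subcoalgebra containing 1, and C a left H-module coalgebra such that the H-action is compatible with the comultiplication: Δ(h·x) = (Δh)·(Δx). If C_0 ⊆ C_1 ⊆ … denotes the coradical filtration of C and C is connected with C_0 = k·ε stable under K, then K·C_l ⊆ C_l for all l ≥ 0. -/
open TensorProduct

/-
By induction on `l`. Compatibility says `Δ(h • x) = Δh • Δx` for the diagonal action
of `H ⊗ H` on `C ⊗ C`. For `h ∈ K` we have `Δh ∈ K ⊗ K`, and if `K` stabilises `C_0` and `C_n`,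
then `K ⊗ K` stabilises both `C_0 ⊗ C` and `C ⊗ C_n`; hence `Δ(h • x) ∈ C_0 ⊗ C + C ⊗ C_n`
whenever `Δx` is, i.e. `K` stabilises `C_{n+1}`.
-/

/-- A submodule `V` of a coalgebra `C` is a subcoalgebra if `Δ(V) ⊆ V ⊗ V`. -/
def IsSubcoalgebra (k : Type*) {C : Type*} [CommRing k] [AddCommGroup C] [Module k C]
    [Coalgebra k C] (V : Submodule k C) : Prop :=
  ∀ x ∈ V, Coalgebra.comul (R := k) x ∈
    LinearMap.range (TensorProduct.map V.subtype V.subtype)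

/-- The coradical of a coalgebra: the sum of all simple subcoalgebras. -/
noncomputable def coradical (k C : Type*) [CommRing k] [AddCommGroup C] [Module k C]
    [Coalgebra k C] : Submodule k C :=
  sSup {V : Submodule k C | IsSubcoalgebra k V ∧ V ≠ ⊥ ∧
    ∀ W ≤ V, IsSubcoalgebra k W → W = ⊥ ∨ W = V}

/-- The coradical filtration: `C_0` is the coradical and
`C_{n+1} = Δ⁻¹(C_0 ⊗ C + C ⊗ C_n)`. -/
noncomputable def coradFil (k C : Type*) [CommRing k] [AddCommGroup C] [Module k C]
    [Coalgebra k C] : ℕ → Submodule k C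
  | 0 => coradical k C
  | n + 1 =>
      Submodule.comap (Coalgebra.comul (R := k))
        (LinearMap.range (TensorProduct.map (coradical k C).subtype
            (LinearMap.id : C →ₗ[k] C)) ⊔
          LinearMap.range (TensorProduct.map (LinearMap.id : C →ₗ[k] C)
            (coradFil k C n).subtype))

section DiagonalAction

variable {k H C : Type*} [CommRing k] [Ring H] [Algebra k H]
    [AddCommGroup C] [Module k C] [Module H C] [IsScalarTower k H C]

variable (k) in
noncomputable def diagSMul : H ⊗[k] H →ₗ[k] C ⊗[k] C →ₗ[k] C ⊗[k] C :=
  TensorProduct.map₂ (Algebra.lsmul k k C).toLinearMap (Algebra.lsmul k k C).toLinearMap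

theorem diagSMul_tmul (a b : H) :
    diagSMul k (a ⊗ₜ[k] b) = TensorProduct.map (Algebra.lsmul k k C a) (Algebra.lsmul k k C b) :=
  rfl

theorem diagSMul_tmul_tmul (a b : H) (u v : C) :
    diagSMul k (a ⊗ₜ[k] b) (u ⊗ₜ[k] v) = (a • u) ⊗ₜ[k] (b • v) :=
  rfl

theorem range_lsmul_comp_le {M : Type*} [AddCommGroup M] [Module k M] {f : M →ₗ[k] C}
    {K : Submodule k H} (hf : ∀ a ∈ K, ∀ x ∈ LinearMap.range f, a • x ∈ LinearMap.range f)
    {a : H} (ha : a ∈ K) :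
    LinearMap.range (Algebra.lsmul k k C a ∘ₗ f) ≤ LinearMap.range f := by
  rw [LinearMap.range_comp, Submodule.map_le_iff_le_comap]
  exact hf a ha

theorem diagSMul_mem_range_map {M N : Type*} [AddCommGroup M] [Module k M]
    [AddCommGroup N] [Module k N] {f : M →ₗ[k] C} {g : N →ₗ[k] C} {K K' : Submodule k H}
    (hf : ∀ a ∈ K, ∀ x ∈ LinearMap.range f, a • x ∈ LinearMap.range f)
    (hg : ∀ b ∈ K', ∀ y ∈ LinearMap.range g, b • y ∈ LinearMap.range g)
    {w : H ⊗[k] H} (hw : w ∈ LinearMap.range (TensorProduct.map K.subtype K'.subtype))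
    {s : C ⊗[k] C} (hs : s ∈ LinearMap.range (TensorProduct.map f g)) :
    diagSMul k w s ∈ LinearMap.range (TensorProduct.map f g) := by
  obtain ⟨w, rfl⟩ := hw
  induction w using TensorProduct.induction_on with
  | zero => simp
  | add w₁ w₂ h₁ h₂ => simpa only [map_add, LinearMap.add_apply] using add_mem h₁ h₂
  | tmul a b =>
    obtain ⟨t, rfl⟩ := hs
    rw [TensorProduct.map_tmul, diagSMul_tmul, TensorProduct.map_map]
    exact TensorProduct.range_map_mono (range_lsmul_comp_le hf a.2) (range_lsmul_comp_le hg b.2)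
      ⟨t, rfl⟩

end DiagonalAction

section ModuleCoalgebra

variable {k H C : Type*} [CommRing k] [Ring H] [Bialgebra k H]
    [AddCommGroup C] [Module k C] [Coalgebra k C] [Module H C] [IsScalarTower k H C]

theorem comul_smul_eq_diagSMul {h : H} {x : C}
    (hcompat : ∃ (n m : ℕ) (h1 h2 : Fin n → H) (x1 x2 : Fin m → C),
      Coalgebra.comul (R := k) h = ∑ i, h1 i ⊗ₜ[k] h2 i ∧
      Coalgebra.comul (R := k) x = ∑ j, x1 j ⊗ₜ[k] x2 j ∧
      Coalgebra.comul (R := k) (h • x) = ∑ i, ∑ j, (h1 i • x1 j) ⊗ₜ[k] (h2 i • x2 j)) :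
    Coalgebra.comul (R := k) (h • x) =
      diagSMul k (Coalgebra.comul (R := k) h) (Coalgebra.comul (R := k) x) := by
  obtain ⟨n, m, h1, h2, x1, x2, hh, hx, hhx⟩ := hcompat
  simp only [hhx, hh, hx, map_sum, LinearMap.sum_apply, diagSMul_tmul_tmul]
  exact Finset.sum_comm

theorem smul_mem_coradFil_succ
    (hcompat : ∀ (h : H) (x : C), ∃ (n m : ℕ) (h1 h2 : Fin n → H) (x1 x2 : Fin m → C),
      Coalgebra.comul (R := k) h = ∑ i, h1 i ⊗ₜ[k] h2 i ∧
      Coalgebra.comul (R := k) x = ∑ j, x1 j ⊗ₜ[k] x2 j ∧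
      Coalgebra.comul (R := k) (h • x) = ∑ i, ∑ j, (h1 i • x1 j) ⊗ₜ[k] (h2 i • x2 j))
    {K : Submodule k H} (hK : IsSubcoalgebra k K)
    (h₀ : ∀ h ∈ K, ∀ x ∈ coradFil k C 0, h • x ∈ coradFil k C 0) {n : ℕ}
    (hn : ∀ h ∈ K, ∀ x ∈ coradFil k C n, h • x ∈ coradFil k C n) :
    ∀ h ∈ K, ∀ x ∈ coradFil k C (n + 1), h • x ∈ coradFil k C (n + 1) := by
  intro h hh x hx
  rw [coradFil, Submodule.mem_comap] at hx ⊢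
  rw [comul_smul_eq_diagSMul (hcompat h x)]
  obtain ⟨u, hu, v, hv, huv⟩ := Submodule.mem_sup.mp hx
  rw [← huv, map_add]
  refine add_mem (Submodule.mem_sup_left ?_) (Submodule.mem_sup_right ?_)
  · refine diagSMul_mem_range_map ?_ (fun b _ y _ => ⟨b • y, rfl⟩) (hK h hh) hu
    rw [Submodule.range_subtype]
    exact h₀
  · refine diagSMul_mem_range_map (fun a _ y _ => ⟨a • y, rfl⟩) ?_ (hK h hh) hv
    rw [Submodule.range_subtype]
    exact hn

end ModuleCoalgebra

theorem stmt_6_general {k H C : Type*} [Field k] [Ring H] [HopfAlgebra k H]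
    [AddCommGroup C] [Module k C] [Coalgebra k C]
    [Module H C] [IsScalarTower k H C]
    (hcompat : ∀ (h : H) (x : C), ∃ (n m : ℕ) (h1 h2 : Fin n → H) (x1 x2 : Fin m → C),
      Coalgebra.comul (R := k) h = ∑ i, h1 i ⊗ₜ[k] h2 i ∧
      Coalgebra.comul (R := k) x = ∑ j, x1 j ⊗ₜ[k] x2 j ∧
      Coalgebra.comul (R := k) (h • x) = ∑ i, ∑ j, (h1 i • x1 j) ⊗ₜ[k] (h2 i • x2 j))
    (K : Submodule k H)
    (hKsub : IsSubcoalgebra k K)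
    (hstab : ∀ h ∈ K, ∀ x ∈ coradFil k C 0, h • x ∈ coradFil k C 0)
    (l : ℕ) :
    ∀ h ∈ K, ∀ x ∈ coradFil k C l, h • x ∈ coradFil k C l := by
  induction l with
  | zero => exact hstab
  | succ n ih => exact smul_mem_coradFil_succ hcompat hKsub hstab ih

/-- For a subcoalgebra `K ∋ 1` of a Hopf algebra `H` acting on a
connected left `H`-module coalgebra `C` compatibly with the comultiplication
(`Δ(h·x) = Δh · Δx`), with `C_0` stable under `K`, each term `C_l` of the
coradical filtration is stable under `K`. -/
theorem stmt_6 {k H C : Type*} [Field k] [Ring H] [HopfAlgebra k H]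
    [AddCommGroup C] [Module k C] [Coalgebra k C]
    [Module H C] [IsScalarTower k H C]
    (hcompat : ∀ (h : H) (x : C), ∃ (n m : ℕ) (h1 h2 : Fin n → H) (x1 x2 : Fin m → C),
      Coalgebra.comul (R := k) h = ∑ i, h1 i ⊗ₜ[k] h2 i ∧
      Coalgebra.comul (R := k) x = ∑ j, x1 j ⊗ₜ[k] x2 j ∧
      Coalgebra.comul (R := k) (h • x) = ∑ i, ∑ j, (h1 i • x1 j) ⊗ₜ[k] (h2 i • x2 j))
    (K : Submodule k H) (h1K : (1 : H) ∈ K)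
    (hKsub : IsSubcoalgebra k K)
    (e : C) (hge : Coalgebra.comul (R := k) e = e ⊗ₜ[k] e)
    (hce : Coalgebra.counit (R := k) e = 1) (he0 : e ≠ 0)
    (hconn : coradical k C = Submodule.span k {e})
    (hstab : ∀ h ∈ K, ∀ x ∈ coradFil k C 0, h • x ∈ coradFil k C 0)
    (l : ℕ) :
    ∀ h ∈ K, ∀ x ∈ coradFil k C l, h • x ∈ coradFil k C l :=
  stmt_6_general hcompat K hKsub hstab l
end

section
/- Let H be a Hopf algebra over a field k, and let H° = {f ∈ H* | dim(fH) < ∞} be the finite dual (where H acts on H* on the right). Then H° is closed under the convolution product, the coproduct dualizing multiplication of H restricts to H° → H°⊗H°, and H° is a Hopf algebra. -/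
/-!
A functional `f` lies in `H°` exactly when `f (x * y) = ∑ᵢ gᵢ x * hᵢ y` for finitely many
functionals `gᵢ, hᵢ`. Taking for `hᵢ` a basis of the span of the translates of `f`, the
translates of the `hᵢ` and of the coordinate functionals `gᵢ` stay in that finite-dimensional
span, so the `gᵢ, hᵢ` lie in `H°` as well. Such decompositions survive convolution because the
coproduct is multiplicative, and precomposition with the antipode because it reverses products.
-/

open Coalgebra

section FiniteDual

variable {k A : Type*} [Field k] [Ring A] [Algebra k A]

variable (k) in
def translates (f : Module.Dual k A) : Submodule k (Module.Dual k A) :=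
  Submodule.span k (Set.range fun h => f ∘ₗ LinearMap.mulLeft k h)

variable (k A) in
def finiteDual : Set (Module.Dual k A) :=
  {f | FiniteDimensional k (translates k f)}

def translateMap (f : Module.Dual k A) : A →ₗ[k] Module.Dual k A :=
  (LinearMap.mul k A).compr₂ f

@[simp] lemma translateMap_apply (f : Module.Dual k A) (h z : A) :
    translateMap f h z = f (h * z) := rfl

lemma translateMap_mem_translates (f : Module.Dual k A) (h : A) :
    translateMap f h ∈ translates k f :=
  Submodule.subset_span ⟨h, rfl⟩

lemma translateMap_mem_translates_of_mem {f g : Module.Dual k A} (hg : g ∈ translates k f)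
    (h : A) : translateMap g h ∈ translates k f := by
  have : translates k f ≤
      (translates k f).comap (LinearMap.lcomp k k (LinearMap.mulLeft k h)) := by
    rw [translates, Submodule.span_le]
    rintro _ ⟨h', rfl⟩
    exact Submodule.subset_span ⟨h' * h, by ext; simp⟩
  exact this hg

lemma translates_le_of_mem {f g : Module.Dual k A} (hg : g ∈ translates k f) :
    translates k g ≤ translates k f := by
  rw [translates, Submodule.span_le]
  rintro _ ⟨h, rfl⟩
  exact translateMap_mem_translates_of_mem hg h

lemma mem_finiteDual_of_sum_mul {ι : Type*} [Fintype ι] {f : Module.Dual k A}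
    (gs hs : ι → Module.Dual k A) (hf : ∀ x y, f (x * y) = ∑ i, gs i x * hs i y) :
    f ∈ finiteDual k A := by
  have hle : translates k f ≤ Submodule.span k (Set.range hs) := by
    rw [translates, Submodule.span_le]
    rintro _ ⟨h, rfl⟩
    have : f ∘ₗ LinearMap.mulLeft k h = ∑ i, gs i h • hs i := by
      ext y; simp [hf]
    change f ∘ₗ LinearMap.mulLeft k h ∈ _
    rw [this]
    exact Submodule.sum_mem _ fun i _ => Submodule.smul_mem _ _ (Submodule.subset_span ⟨i, rfl⟩)
  have := FiniteDimensional.span_of_finite k (Set.finite_range hs)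
  exact Submodule.finiteDimensional_of_le hle

theorem exists_sum_mul_of_mem_finiteDual {f : Module.Dual k A} (hf : f ∈ finiteDual k A) :
    ∃ (n : ℕ) (gs hs : Fin n → Module.Dual k A),
      (∀ i, gs i ∈ finiteDual k A ∧ hs i ∈ finiteDual k A) ∧
      ∀ x y, f (x * y) = ∑ i, gs i x * hs i y := by
  have : FiniteDimensional k (translates k f) := hf
  have := Module.Free.of_divisionRing k (translates k f)
  let b := Module.finBasis k (translates k f)
  let L : A →ₗ[k] translates k f :=
    (translateMap f).codRestrict _ (translateMap_mem_translates f)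
  let M (j) : A →ₗ[k] translates k f :=
    (translateMap (b j : Module.Dual k A)).codRestrict _
      (translateMap_mem_translates_of_mem (b j).2)
  have hdec : ∀ x y, f (x * y) = ∑ i, b.coord i (L x) * (b i : Module.Dual k A) y := by
    intro x y
    conv_lhs => rw [show f (x * y) = (L x : Module.Dual k A) y from rfl, ← b.sum_repr (L x)]
    simp only [Submodule.coe_sum, Submodule.coe_smul, LinearMap.coe_sum, Finset.sum_apply,
      LinearMap.smul_apply, smul_eq_mul, Module.Basis.coord_apply]
  refine ⟨_, fun i => b.coord i ∘ₗ L, fun i => b i, fun i => ⟨?_, ?_⟩, hdec⟩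
  · -- Translating `L x = ∑ⱼ gⱼ(x) bⱼ` once more by `y` decomposes each `gᵢ` in the same way.
    have hL : ∀ x y, L (x * y) = ∑ j, b.coord j (L x) • M j y := by
      intro x y
      ext z
      simp [L, M, mul_assoc, hdec]
    refine mem_finiteDual_of_sum_mul (fun j => b.coord j ∘ₗ L) (fun j => b.coord i ∘ₗ M j)
      fun x y => ?_
    simp [hL]
  · exact Submodule.finiteDimensional_of_le (translates_le_of_mem (b i).2)

end FiniteDual

section Convolution

variable {k A : Type*} [CommSemiring k] [Semiring A] [Bialgebra k A]

def dualConv (f g : Module.Dual k A) : Module.Dual k A :=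
  (TensorProduct.lid k k).toLinearMap ∘ₗ TensorProduct.map f g ∘ₗ comul

lemma dualConv_apply {ι : Type*} (f g : Module.Dual k A) {a : A} (r : Repr k a ι) :
    dualConv f g a = ∑ i ∈ r.index, f (r.left i) * g (r.right i) := by
  simp [dualConv, ← r.eq]

theorem dualConv_mul_eq_sum {ι κ : Type*} [Fintype ι] [Fintype κ] {f g : Module.Dual k A}
    {a b : ι → Module.Dual k A} {c d : κ → Module.Dual k A}
    (hf : ∀ x y, f (x * y) = ∑ i, a i x * b i y) (hg : ∀ x y, g (x * y) = ∑ j, c j x * d j y)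
    (x y : A) :
    dualConv f g (x * y) =
      ∑ p : ι × κ, dualConv (a p.1) (c p.2) x * dualConv (b p.1) (d p.2) y := by
  simp only [dualConv_apply _ _ (ℛ k x), dualConv_apply _ _ (ℛ k y),
    dualConv_apply f g ((ℛ k x).mul (ℛ k y)), Finset.sum_mul_sum, Repr.mul_index]
  rw [Finset.sum_product, eq_comm, Finset.sum_comm]
  refine Finset.sum_congr rfl fun i _ => ?_
  rw [Finset.sum_comm]
  refine Finset.sum_congr rfl fun j _ => ?_
  simp only [Repr.mul_left, Repr.mul_right, hf, hg, Finset.sum_mul_sum, Fintype.sum_prod_type]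
  exact Finset.sum_congr rfl fun p _ => Finset.sum_congr rfl fun q _ => mul_mul_mul_comm _ _ _ _

end Convolution

section Antipode

variable {k A : Type*} [CommSemiring k] [Semiring A] [HopfAlgebra k A]

lemma comp_antipode_mul_eq_sum {ι : Type*} [Fintype ι] {f : Module.Dual k A}
    {gs hs : ι → Module.Dual k A} (hf : ∀ x y, f (x * y) = ∑ i, gs i x * hs i y) (x y : A) :
    (f ∘ₗ HopfAlgebra.antipode k) (x * y) =
      ∑ i, (hs i ∘ₗ HopfAlgebra.antipode k) x * (gs i ∘ₗ HopfAlgebra.antipode k) y := by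
  simp [HopfAlgebra.antipode_mul_antidistrib, hf, mul_comm]

end Antipode

/-- The finite dual `H° = {f ∈ H* | dim (f·H) < ∞}` of a Hopf
algebra `H` (with right action `(f·h)(x) = f(hx)`) is closed under the
convolution product, the coproduct dual to the multiplication of `H` restricts
to `H° → H° ⊗ H°` (expressed via finite Sweedler decompositions), and the dual
of the antipode restricts to `H°`, making `H°` a Hopf algebra. -/
theorem stmt_12 {k H : Type*} [Field k] [Ring H] [HopfAlgebra k H] :
    let rAct : H → Module.Dual k H → Module.Dual k H :=
      fun h f => f ∘ₗ LinearMap.mulLeft k h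
    let fdual : Set (Module.Dual k H) :=
      {f | FiniteDimensional k (Submodule.span k (Set.range fun h => rAct h f))}
    let conv : Module.Dual k H → Module.Dual k H → Module.Dual k H :=
      fun f g => (TensorProduct.lid k k).toLinearMap ∘ₗ
        TensorProduct.map f g ∘ₗ Coalgebra.comul (R := k)
    (∀ f ∈ fdual, ∀ g ∈ fdual, conv f g ∈ fdual) ∧
    (∀ f ∈ fdual, ∃ (n : ℕ) (gs hs : Fin n → Module.Dual k H),
      (∀ i, gs i ∈ fdual ∧ hs i ∈ fdual) ∧
      ∀ x y : H, f (x * y) = ∑ i, gs i x * hs i y) ∧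
    (∀ f ∈ fdual, (f ∘ₗ HopfAlgebra.antipode (R := k)) ∈ fdual) := by
  intro rAct fdual conv
  refine ⟨fun f hf g hg => ?_, fun f hf => exists_sum_mul_of_mem_finiteDual hf, fun f hf => ?_⟩
  · obtain ⟨m, a, b, -, hfab⟩ := exists_sum_mul_of_mem_finiteDual hf
    obtain ⟨n, c, d, -, hgcd⟩ := exists_sum_mul_of_mem_finiteDual hg
    exact mem_finiteDual_of_sum_mul _ _ (dualConv_mul_eq_sum hfab hgcd)
  · obtain ⟨n, gs, hs, -, hfgh⟩ := exists_sum_mul_of_mem_finiteDual hf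
    exact mem_finiteDual_of_sum_mul _ _ (comp_antipode_mul_eq_sum hfgh)
end

section
/- Let B be an algebra with a character ε, B⁺ = ker ε, and suppose B contains elements z_{ij} (i,j ∈ I, with a distinguished index N) satisfying Σ_{k∈I} z_{ik} z_{kj} = z_{ij} and ε(z_{ij}) = δ_{iN}δ_{jN}. Then for all i,j with (i ≠ N and j ≠ N) or (i = N = j), one has z_{ij} − δ_{iN}δ_{jN} ∈ (B⁺)². -/
/-- If elements `z i j` of an algebra `B` with character `ε`
satisfy `∑_k z i k * z k j = z i j` and `ε (z i j) = δ_{iN} δ_{jN}`, then for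
all `i, j` with (`i ≠ N` and `j ≠ N`) or (`i = N = j`) one has
`z i j − δ_{iN} δ_{jN} ∈ (B⁺)²`. -/
theorem stmt_17 {B : Type*} [Ring B] [Algebra ℂ B] (ε : B →ₐ[ℂ] ℂ)
    {I : Type*} [Fintype I] [DecidableEq I] (N : I) (z : I → I → B)
    (hmul : ∀ i j, ∑ k, z i k * z k j = z i j)
    (hε : ∀ i j, ε (z i j) = if i = N ∧ j = N then 1 else 0)
    (i j : I) (hij : (i ≠ N ∧ j ≠ N) ∨ (i = N ∧ j = N)) :
    z i j - (if i = N ∧ j = N then (1 : B) else 0) ∈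
      Submodule.span ℂ {y : B | ∃ a b : B, ε a = 0 ∧ ε b = 0 ∧ y = a * b} := by
  rcases hij with ⟨hi, hj⟩ | ⟨rfl, rfl⟩
  · rw [if_neg (by simp [hi, hj]), sub_zero, ← hmul i j]
    apply Submodule.sum_mem
    intro k _
    exact Submodule.subset_span ⟨z i k, z k j, by simp [hε, hi], by simp [hε, hj], rfl⟩
  · rw [if_pos ⟨rfl, rfl⟩]
    have key : ∑ k, (z j k - (if k = j then (1:B) else 0)) *
        (z k j - (if k = j then (1:B) else 0)) = 1 - z j j := by
      have expand : ∀ k, (z j k - (if k = j then (1:B) else 0)) *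
          (z k j - (if k = j then (1:B) else 0)) =
          z j k * z k j - (if k = j then z k j else 0)
            - (if k = j then z j k else 0) + (if k = j then 1 else 0) := by
        intro k
        by_cases h : k = j <;> simp [h] <;> noncomm_ring
      simp_rw [expand]
      rw [Finset.sum_add_distrib, Finset.sum_sub_distrib, Finset.sum_sub_distrib, hmul]
      simp
      noncomm_ring
    have hrw : z j j - 1 = - ∑ k, (z j k - (if k = j then (1:B) else 0)) *
        (z k j - (if k = j then (1:B) else 0)) := by
      rw [key]; rw [neg_sub]
    rw [hrw]
    apply Submodule.neg_mem
    apply Submodule.sum_mem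
    intro k _
    refine Submodule.subset_span ⟨_, _, ?_, ?_, rfl⟩
    · by_cases h : k = j <;> simp [h, hε]
    · by_cases h : k = j <;> simp [h, hε]
end
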